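/- arXiv:2510.17736 — 4 statements merged into one kernel-verified Lean document; each statement's English description precedes it below -/
import Mathlib

section
/- For real numbers 0 < q < 1 and 0 < λ < 1 - q, the Kullback–Leibler divergence between Bernoulli(q+λ) and Bernoulli(q) satisfies D(q+λ ‖ q) ≥ λ·log(1/q) − log 2, where D(x ‖ y) = x·log(x/y) + (1−x)·log((1−x)/(1−y)). -/
theorem stmt_0 (q l : ℝ) (hq : 0 < q) (hq1 : q < 1) (hl : 0 < l) (hl1 : l < 1 - q) :
    (q + l) * Real.log ((q + l) / q) + (1 - (q + l)) * Real.log ((1 - (q + l)) / (1 - q)) ≥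
      l * Real.log (1 / q) - Real.log 2 := by
  set p := q + l with hp
  have hp0 : 0 < p := by positivity
  have hp1 : p < 1 := by simp [hp]; linarith
  have h1p : 0 < 1 - p := by linarith
  have h1q : 0 < 1 - q := by linarith
  have hent : Real.binEntropy p ≤ Real.log 2 := Real.binEntropy_le_log_two
  rw [Real.binEntropy, Real.log_inv, Real.log_inv] at hent
  have hlogq : Real.log q < 0 := Real.log_neg hq hq1
  have hlog1q : Real.log (1 - q) < 0 := Real.log_neg h1q (by linarith)
  rw [Real.log_div (by positivity) (by positivity), Real.log_div (by positivity) (by positivity),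
    one_div, Real.log_inv]
  have h2 : p * (-Real.log q) ≥ l * (-Real.log q) := by
    apply mul_le_mul_of_nonneg_right _ (by linarith)
    simp [hp]; linarith
  nlinarith [mul_pos h1p (neg_pos.mpr hlog1q)]
end

section
/- Let 0 < ε < 1, let n be sufficiently large, let k be a positive integer with 2 ≤ k ≤ log n / (2 log log n), and let G be an n-vertex graph with minimum degree at least n − n^{1−(1+ε)/k}. Then G contains a clique K of size k which is also a dominating set, i.e., every vertex outside K has a neighbour in K. -/
set_option maxHeartbeats 1000000

open Finset in
lemma aux_dom {V : Type} [Fintype V] [DecidableEq V] (G : SimpleGraph V) [DecidableRel G.Adj]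
    (d c : ℝ) (hd0 : 0 ≤ d) (hc : 0 < c)
    (hd : ∀ v : V, ((Finset.univ.filter fun w => ¬ G.Adj v w).card : ℝ) ≤ d)
    (k : ℕ)
    (hcard : c + (k : ℝ) * d ≤ (Fintype.card V : ℝ)) :
    ∀ i, i ≤ k →
      ∃ K : Finset V, K.card = i ∧ G.IsClique (K : Set V) ∧
        c + ((k : ℝ) - i) * d ≤
          ((Finset.univ.filter fun w => w ∉ K ∧ ∀ u ∈ K, G.Adj w u).card : ℝ) ∧
        ((Finset.univ.filter fun v => ∀ u ∈ K, ¬ G.Adj v u).card : ℝ) ≤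
          (Fintype.card V : ℝ) * (d / c) ^ i := by
  intro i
  induction i with
  | zero =>
    intro _
    refine ⟨∅, rfl, by simp [SimpleGraph.IsClique], ?_, ?_⟩
    · have : (Finset.univ.filter fun w : V => w ∉ (∅ : Finset V) ∧ ∀ u ∈ (∅ : Finset V), G.Adj w u) = Finset.univ := by
        ext x; simp
      rw [this, Finset.card_univ]
      push_cast
      linarith
    · have : (Finset.univ.filter fun v : V => ∀ u ∈ (∅ : Finset V), ¬ G.Adj v u) = Finset.univ := by
        ext x; simp
      rw [this, Finset.card_univ]
      simp
  | succ i ih =>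
    intro hik
    obtain ⟨K, hKcard, hKcl, hC, hB⟩ := ih (Nat.le_of_succ_le hik)
    set C := (Finset.univ.filter fun w => w ∉ K ∧ ∀ u ∈ K, G.Adj w u) with hCdef
    set B := (Finset.univ.filter fun v => ∀ u ∈ K, ¬ G.Adj v u) with hBdef
    have hki : (0:ℝ) ≤ (k:ℝ) - i := by
      have : (i:ℝ) ≤ k := by exact_mod_cast Nat.le_of_succ_le hik
      linarith
    have hCpos : (0:ℝ) < C.card := lt_of_lt_of_le (by nlinarith) hC
    have hCne : C.Nonempty := Finset.card_pos.mp (by exact_mod_cast hCpos)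
    -- double counting
    have hdc : (∑ w ∈ C, ((B.filter fun v => ¬ G.Adj v w).card : ℝ)) ≤ (B.card : ℝ) * d := by
      have hswap : (∑ w ∈ C, ((B.filter fun v => ¬ G.Adj v w).card)) =
          ∑ v ∈ B, ((C.filter fun w => ¬ G.Adj v w).card) := by
        simp only [Finset.card_filter]
        exact Finset.sum_comm
      have h1 : ∀ v ∈ B, ((C.filter fun w => ¬ G.Adj v w).card : ℝ) ≤ d := by
        intro v _
        refine le_trans ?_ (hd v)
        exact_mod_cast Finset.card_le_card (Finset.filter_subset_filter _ (Finset.subset_univ C))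
      calc (∑ w ∈ C, ((B.filter fun v => ¬ G.Adj v w).card : ℝ))
          = ∑ v ∈ B, ((C.filter fun w => ¬ G.Adj v w).card : ℝ) := by exact_mod_cast hswap
        _ ≤ ∑ _v ∈ B, d := Finset.sum_le_sum h1
        _ = (B.card : ℝ) * d := by rw [Finset.sum_const, nsmul_eq_mul]
    -- averaging
    have havg : ∃ w ∈ C, (C.card : ℝ) * ((B.filter fun v => ¬ G.Adj v w).card : ℝ) ≤ (B.card : ℝ) * d := by
      by_contra hcon
      push_neg at hcon
      have : (C.card : ℝ) * ((B.card : ℝ) * d) < (C.card : ℝ) * (∑ w ∈ C, ((B.filter fun v => ¬ G.Adj v w).card : ℝ)) := by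
        rw [Finset.mul_sum]
        calc (C.card : ℝ) * ((B.card : ℝ) * d) = ∑ _w ∈ C, ((B.card : ℝ) * d) := by
              rw [Finset.sum_const, nsmul_eq_mul]
          _ < ∑ w ∈ C, (C.card : ℝ) * ((B.filter fun v => ¬ G.Adj v w).card : ℝ) :=
              Finset.sum_lt_sum_of_nonempty hCne (fun w hw => hcon w hw)
      nlinarith [hdc, hCpos]
    obtain ⟨w, hwC, hw⟩ := havg
    rw [hCdef, Finset.mem_filter] at hwC
    obtain ⟨-, hwK, hwadj⟩ := hwC
    refine ⟨insert w K, ?_, ?_, ?_, ?_⟩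
    · rw [Finset.card_insert_of_notMem hwK, hKcard]
    · rw [Finset.coe_insert]
      exact hKcl.insert (fun b hb _ => hwadj b hb)
    · -- new common neighbourhood
      have hsub : C.filter (fun x => G.Adj x w) ⊆
          (Finset.univ.filter fun x => x ∉ insert w K ∧ ∀ u ∈ insert w K, G.Adj x u) := by
        intro x hx
        rw [Finset.mem_filter] at hx
        obtain ⟨hxC, hxw⟩ := hx
        rw [hCdef, Finset.mem_filter] at hxC
        obtain ⟨-, hxK, hxadj⟩ := hxC
        rw [Finset.mem_filter]
        refine ⟨Finset.mem_univ _, ?_, ?_⟩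
        · simp only [Finset.mem_insert, not_or]
          exact ⟨hxw.ne, hxK⟩
        · intro u hu
          rw [Finset.mem_insert] at hu
          rcases hu with rfl | hu
          · exact hxw
          · exact hxadj u hu
      have hCsplit : (C.filter fun x => G.Adj x w).card + (C.filter fun x => ¬ G.Adj x w).card = C.card :=
        Finset.card_filter_add_card_filter_not _
      have hnb : ((C.filter fun x => ¬ G.Adj x w).card : ℝ) ≤ d := by
        refine le_trans ?_ (hd w)
        have : (C.filter fun x => ¬ G.Adj x w) ⊆ (Finset.univ.filter fun x => ¬ G.Adj w x) := by
          intro x hx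
          rw [Finset.mem_filter] at hx ⊢
          exact ⟨Finset.mem_univ _, fun h => hx.2 h.symm⟩
        exact_mod_cast Finset.card_le_card this
      have := Finset.card_le_card hsub
      have hcast : ((C.filter fun x => G.Adj x w).card : ℝ) ≤
          ((Finset.univ.filter fun x => x ∉ insert w K ∧ ∀ u ∈ insert w K, G.Adj x u).card : ℝ) := by
        exact_mod_cast this
      have hCsplit' : ((C.filter fun x => G.Adj x w).card : ℝ) + ((C.filter fun x => ¬ G.Adj x w).card : ℝ) = (C.card : ℝ) := by
        exact_mod_cast hCsplit
      push_cast
      linarith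
    · -- new bad set
      have hBeq : (Finset.univ.filter fun v => ∀ u ∈ insert w K, ¬ G.Adj v u) =
          B.filter (fun v => ¬ G.Adj v w) := by
        rw [hBdef, Finset.filter_filter]
        apply Finset.filter_congr
        intro x _
        simp only [Finset.mem_insert]
        constructor
        · intro h; exact ⟨fun u hu => h u (Or.inr hu), h w (Or.inl rfl)⟩
        · rintro ⟨h1, h2⟩ u (rfl | hu)
          · exact h2
          · exact h1 u hu
      rw [hBeq]
      have hCgec : c ≤ (C.card : ℝ) := by nlinarith
      have hBnn : (0:ℝ) ≤ ((B.filter fun v => ¬ G.Adj v w).card : ℝ) := by positivity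
      have h1 : ((B.filter fun v => ¬ G.Adj v w).card : ℝ) * c ≤ (B.card : ℝ) * d := by
        calc ((B.filter fun v => ¬ G.Adj v w).card : ℝ) * c
            ≤ ((B.filter fun v => ¬ G.Adj v w).card : ℝ) * (C.card : ℝ) := by
              exact mul_le_mul_of_nonneg_left hCgec hBnn
          _ = (C.card : ℝ) * ((B.filter fun v => ¬ G.Adj v w).card : ℝ) := mul_comm _ _
          _ ≤ (B.card : ℝ) * d := hw
      have h2 : (B.card : ℝ) * d ≤ ((Fintype.card V : ℝ) * (d / c) ^ i) * d :=
        mul_le_mul_of_nonneg_right hB hd0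
      have h3 : ((B.filter fun v => ¬ G.Adj v w).card : ℝ) ≤ ((Fintype.card V : ℝ) * (d / c) ^ i) * d / c := by
        rw [le_div_iff₀ hc]
        linarith
      calc ((B.filter fun v => ¬ G.Adj v w).card : ℝ)
          ≤ ((Fintype.card V : ℝ) * (d / c) ^ i) * d / c := h3
        _ = (Fintype.card V : ℝ) * (d / c) ^ (i + 1) := by
            rw [pow_succ]; ring

theorem stmt_6 (ε : ℝ) (hε : 0 < ε) (hε1 : ε < 1) :
    ∃ N : ℕ, ∀ n : ℕ, N ≤ n → ∀ k : ℕ, 2 ≤ k →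
      (k : ℝ) ≤ Real.log n / (2 * Real.log (Real.log n)) →
      ∀ (V : Type) [Fintype V] [DecidableEq V] (G : SimpleGraph V) [DecidableRel G.Adj],
        Fintype.card V = n →
        (∀ v : V, (n : ℝ) - (n : ℝ) ^ ((1 : ℝ) - (1 + ε) / k) ≤ G.degree v) →
        ∃ K : Finset V, K.card = k ∧ G.IsClique K ∧
          ∀ v : V, v ∉ K → ∃ u ∈ K, G.Adj v u := by
  refine ⟨⌈Real.exp ((2:ℝ) ^ ((2*ε)⁻¹) + ε⁻¹ + 10)⌉₊, ?_⟩
  intro n hn k hk2 hk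
  have hnE : Real.exp ((2:ℝ) ^ ((2*ε)⁻¹) + ε⁻¹ + 10) ≤ (n:ℝ) :=
    le_trans (Nat.le_ceil _) (Nat.cast_le.mpr hn)
  have hn0 : (0:ℝ) < n := lt_of_lt_of_le (Real.exp_pos _) hnE
  set L := Real.log n with hLdef
  clear_value L
  have hL : (2:ℝ) ^ ((2*ε)⁻¹) + ε⁻¹ + 10 ≤ L := by
    rw [hLdef, ← Real.log_exp ((2:ℝ) ^ ((2*ε)⁻¹) + ε⁻¹ + 10)]
    exact Real.log_le_log (Real.exp_pos _) hnE
  have h2pos : (0:ℝ) < (2:ℝ) ^ ((2*ε)⁻¹) := Real.rpow_pos_of_pos two_pos _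
  have hεinv : (0:ℝ) < ε⁻¹ := by positivity
  have hL10 : (10:ℝ) ≤ L := by linarith
  have hLpos : (0:ℝ) < L := by linarith
  have hL2eps : (2:ℝ) ^ ((2*ε)⁻¹) ≤ L := by linarith
  have hLεinv : ε⁻¹ ≤ L := by linarith
  have hlogL1 : (1:ℝ) ≤ Real.log L := by
    rw [Real.le_log_iff_exp_le hLpos]
    have := Real.exp_one_lt_d9
    linarith
  have hk0 : (0:ℝ) < (k:ℝ) := by positivity
  -- k * (2 log L) ≤ L
  have hkL2 : (k:ℝ) * (2 * Real.log L) ≤ L := by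
    have h2l : (0:ℝ) < 2 * Real.log L := by linarith
    calc (k:ℝ) * (2 * Real.log L) ≤ (L / (2 * Real.log L)) * (2 * Real.log L) :=
          mul_le_mul_of_nonneg_right hk h2l.le
      _ = L := div_mul_cancel₀ _ (ne_of_gt h2l)
  have hkL : (k:ℝ) ≤ L := by nlinarith
  set t := (n:ℝ) ^ ((1+ε)/(k:ℝ)) with htdef
  set d := (n:ℝ) ^ ((1:ℝ) - (1+ε)/(k:ℝ)) with hddef
  clear_value t d
  have ht0 : (0:ℝ) < t := htdef ▸ Real.rpow_pos_of_pos hn0 _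
  have hd0 : (0:ℝ) < d := hddef ▸ Real.rpow_pos_of_pos hn0 _
  have hdt : d * t = (n:ℝ) := by
    rw [hddef, htdef, ← Real.rpow_add hn0]
    ring_nf
    exact Real.rpow_one _
  -- t ≥ L^(2+2ε)
  have ht : L ^ ((2:ℝ) + 2*ε) ≤ t := by
    rw [htdef, Real.rpow_def_of_pos hLpos, Real.rpow_def_of_pos hn0]
    apply Real.exp_le_exp.mpr
    rw [← hLdef]
    have h1 : (2 * Real.log L) ≤ L / (k:ℝ) := by
      rw [le_div_iff₀ hk0]
      nlinarith
    have h2 : (1+ε) * (2 * Real.log L) ≤ (1+ε) * (L / (k:ℝ)) :=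
      mul_le_mul_of_nonneg_left h1 (by linarith)
    have h3 : Real.log L * ((2:ℝ) + 2*ε) = (1+ε) * (2 * Real.log L) := by ring
    have h4 : (1+ε) * (L / (k:ℝ)) = L * ((1+ε)/(k:ℝ)) := by ring
    linarith [h2, h3.le, h3.ge, h4.le, h4.ge]
  -- L^(2ε) ≥ 2
  have h2le : (2:ℝ) ≤ L ^ (2*ε) := by
    have h1 : ((2:ℝ) ^ ((2*ε)⁻¹)) ^ (2*ε) ≤ L ^ (2*ε) :=
      Real.rpow_le_rpow h2pos.le hL2eps (by positivity)
    have h2 : ((2:ℝ) ^ ((2*ε)⁻¹)) ^ (2*ε) = 2 := by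
      rw [← Real.rpow_mul (by norm_num : (0:ℝ) ≤ 2), inv_mul_cancel₀ (by positivity : (2*ε) ≠ 0),
        Real.rpow_one]
    linarith [h1, h2.symm.le]
  -- 2 k^2 ≤ t
  have hk2' : (2:ℝ) ≤ (k:ℝ) := by exact_mod_cast hk2
  have h2k2 : 2 * ((k:ℝ) * (k:ℝ)) ≤ t := by
    have hLL : L ^ ((2:ℝ) + 2*ε) = L * L * L ^ (2*ε) := by
      rw [show ((2:ℝ) + 2*ε) = 1 + 1 + 2*ε by ring, Real.rpow_add hLpos, Real.rpow_add hLpos,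
        Real.rpow_one]
    have h1 : (k:ℝ) * (k:ℝ) ≤ L * L := mul_le_mul hkL hkL hk0.le hLpos.le
    have h2 : 2 * ((k:ℝ) * (k:ℝ)) ≤ L ^ (2*ε) * (L * L) :=
      mul_le_mul h2le h1 (by positivity) (by positivity)
    have h3 : L ^ (2*ε) * (L * L) = L ^ ((2:ℝ) + 2*ε) := by rw [hLL]; ring
    linarith [h2, h3.le, h3.ge, ht]
  have hkt : (k:ℝ) ≤ t / 2 := by nlinarith [h2k2, hk2', hk0]
  have htk0 : (0:ℝ) < t - (k:ℝ) := by nlinarith [hkt, h2k2, hk2']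
  -- Bernoulli
  have hbern : (1:ℝ)/2 ≤ (1 - (k:ℝ)/t) ^ k := by
    have ha : (-2:ℝ) ≤ -((k:ℝ)/t) := by
      have : (k:ℝ)/t ≤ 1 := by
        rw [div_le_one ht0]; linarith
      linarith
    have h1 := one_add_mul_le_pow ha k
    rw [show (1:ℝ) + -((k:ℝ)/t) = 1 - (k:ℝ)/t by ring] at h1
    have h2 : (1:ℝ) + (k:ℝ) * -((k:ℝ)/t) = 1 - (k:ℝ)*(k:ℝ)/t := by ring
    have h3 : (1:ℝ)/2 ≤ 1 - (k:ℝ)*(k:ℝ)/t := by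
      have : (k:ℝ)*(k:ℝ)/t ≤ 1/2 := by
        rw [div_le_iff₀ ht0]; nlinarith
      linarith
    linarith [h1, h2.le, h2.ge, h3]
  -- t^k = n^(1+ε)
  have hkne : (k:ℝ) ≠ 0 := ne_of_gt hk0
  have htk : t ^ k = (n:ℝ) ^ ((1:ℝ)+ε) := by
    rw [htdef, ← Real.rpow_natCast ((n:ℝ) ^ ((1+ε)/(k:ℝ))) k, ← Real.rpow_mul hn0.le]
    congr 1
    rw [div_mul_cancel₀ _ hkne]
  have hneps : (2:ℝ) < (n:ℝ) ^ ε := by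
    rw [Real.rpow_def_of_pos hn0, ← hLdef]
    have h1 : (1:ℝ) ≤ L * ε := by
      have := mul_le_mul_of_nonneg_right hLεinv hε.le
      rw [inv_mul_cancel₀ (ne_of_gt hε)] at this
      linarith [this]
    calc (2:ℝ) < Real.exp 1 := by have := Real.exp_one_gt_d9; linarith
      _ ≤ Real.exp (L * ε) := Real.exp_le_exp.mpr h1
  have hn1e : (n:ℝ) ^ ((1:ℝ)+ε) = (n:ℝ) * (n:ℝ) ^ ε := by
    rw [Real.rpow_add hn0, Real.rpow_one]
  -- main inequality
  have hc0 : (0:ℝ) < (n:ℝ) - (k:ℝ) * d := by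
    have : (n:ℝ) - (k:ℝ) * d = d * (t - (k:ℝ)) := by rw [← hdt]; ring
    rw [this]; positivity
  have hmain : (n:ℝ) * d ^ k < ((n:ℝ) - (k:ℝ) * d) ^ k := by
    have hceq : (n:ℝ) - (k:ℝ) * d = d * (t - (k:ℝ)) := by rw [← hdt]; ring
    rw [hceq, mul_pow]
    have htkeq : (t - (k:ℝ)) = t * (1 - (k:ℝ)/t) := by field_simp
    have h1 : (t - (k:ℝ)) ^ k = t ^ k * (1 - (k:ℝ)/t) ^ k := by rw [htkeq, mul_pow]
    have h2 : t ^ k * ((1:ℝ)/2) ≤ t ^ k * (1 - (k:ℝ)/t) ^ k :=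
      mul_le_mul_of_nonneg_left hbern (by positivity)
    have h3 : (n:ℝ) < t ^ k * ((1:ℝ)/2) := by
      rw [htk, hn1e]
      nlinarith
    have h4 : (n:ℝ) < (t - (k:ℝ)) ^ k := by rw [h1]; linarith
    have hdk : (0:ℝ) < d ^ k := by positivity
    calc (n:ℝ) * d ^ k < (t - (k:ℝ)) ^ k * d ^ k := by nlinarith
      _ = d ^ k * (t - (k:ℝ)) ^ k := mul_comm _ _
  intro V _ _ G _ hcard hdeg
  -- per-vertex non-neighbour bound
  have hdeg' : ∀ v : V, ((Finset.univ.filter fun w => ¬ G.Adj v w).card : ℝ) ≤ d := by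
    intro v
    have hsplit : (Finset.univ.filter fun w => G.Adj v w).card
        + (Finset.univ.filter fun w => ¬ G.Adj v w).card = n := by
      rw [Finset.card_filter_add_card_filter_not, Finset.card_univ, hcard]
    have hner : (Finset.univ.filter fun w => G.Adj v w) = G.neighborFinset v := by
      ext x; simp
    have hdv := hdeg v
    have hsplit' : ((G.degree v : ℝ)) + ((Finset.univ.filter fun w => ¬ G.Adj v w).card : ℝ) = (n:ℝ) := by
      rw [← SimpleGraph.card_neighborFinset_eq_degree, ← hner]
      exact_mod_cast hsplit
    linarith
  set c := (n:ℝ) - (k:ℝ) * d with hcdef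
  have hcardV : c + (k:ℝ) * d ≤ (Fintype.card V : ℝ) := by
    rw [hcard, hcdef]; ring_nf; simp
  obtain ⟨K, hKcard, hKcl, -, hB⟩ :=
    aux_dom G d c hd0.le hc0 hdeg' k hcardV k le_rfl
  refine ⟨K, hKcard, hKcl, ?_⟩
  have hBlt : ((Finset.univ.filter fun v => ∀ u ∈ K, ¬ G.Adj v u).card : ℝ) < 1 := by
    refine lt_of_le_of_lt hB ?_
    rw [hcard, div_pow]
    rw [show (n:ℝ) * (d ^ k / c ^ k) = ((n:ℝ) * d ^ k) / c ^ k by ring,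
      div_lt_one (by positivity : (0:ℝ) < c ^ k)]
    exact hmain
  have hBzero : (Finset.univ.filter fun v => ∀ u ∈ K, ¬ G.Adj v u) = ∅ := by
    rw [← Finset.card_eq_zero]
    have : (Finset.univ.filter fun v => ∀ u ∈ K, ¬ G.Adj v u).card < 1 := by exact_mod_cast hBlt
    omega
  intro v hv
  by_contra hcon
  push_neg at hcon
  have : v ∈ (Finset.univ.filter fun v => ∀ u ∈ K, ¬ G.Adj v u) := by
    rw [Finset.mem_filter]
    exact ⟨Finset.mem_univ _, hcon⟩
  rw [hBzero] at this
  exact absurd this (Finset.notMem_empty v)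
end

section
/- Let ε > 0, let n be sufficiently large, let Δ satisfy n/log n ≤ Δ ≤ n − 1, and set k = ⌈(n−1)/Δ⌉. Then with probability tending to 1 as n → ∞, the random graph G(n, 1 − n^{−(1−ε)/k}) contains no dominating set of size k. -/
/-!
First moment method. A fixed `k`-set `K` dominates a given vertex `v ∉ K` with probability
`1 - (1 - p) ^ k`, and these events are independent over `v` because they are determined by the
pairwise disjoint edge sets `{uv : u ∈ K}`. The union bound over all `K` gives
`C(n, k) (1 - (1 - p) ^ k) ^ (n - k) ≤ exp (k log n - (n - k) (1 - p) ^ k)`.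
For `1 - p = n ^ (-(1 - ε) / k)` we have `(1 - p) ^ k = n ^ (ε - 1)` (capping `ε` at `1`), and
`Δ ≥ n / log n` forces `k ≤ log n + 1`, so the exponent is at most `2 log² n - n ^ ε / 2 → -∞`.
-/

open MeasureTheory Filter ProbabilityTheory
open scoped ENNReal NNReal

theorem ProbabilityTheory.iIndep.measure_biInter_eq_prod_of_pairwiseDisjoint
    {Ω ι V : Type*} {mΩ : MeasurableSpace Ω} {μ : Measure Ω} [IsProbabilityMeasure μ]
    {m : ι → MeasurableSpace Ω} (h_le : ∀ i, m i ≤ mΩ) (h_indep : iIndep m μ)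
    {C : V → Finset ι} {E : V → Set Ω} {T : Finset V} (hC : (T : Set V).PairwiseDisjoint C)
    (hE : ∀ v ∈ T, MeasurableSet[⨆ i ∈ C v, m i] (E v)) :
    μ (⋂ v ∈ T, E v) = ∏ v ∈ T, μ (E v) := by
  classical
  induction T using Finset.induction_on with
  | empty => simp
  | insert a T haT ih =>
    rw [Finset.coe_insert] at hC
    have hdisj : Disjoint (C a) (T.biUnion C) :=
      (Finset.disjoint_biUnion_right _ _ _).2 fun v hv =>
        hC (Set.mem_insert a _) (Set.mem_insert_of_mem a hv) (ne_of_mem_of_not_mem hv haT).symm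
    have hindep : Indep (⨆ i ∈ (C a : Set ι), m i) (⨆ i ∈ (T.biUnion C : Set ι), m i) μ :=
      indep_iSup_of_disjoint h_le h_indep (Finset.disjoint_coe.2 hdisj)
    have hT : MeasurableSet[⨆ i ∈ (T.biUnion C : Set ι), m i] (⋂ v ∈ T, E v) :=
      Finset.measurableSet_biInter T fun v hv => by
        have hle : (⨆ i ∈ C v, m i) ≤ ⨆ i ∈ (T.biUnion C : Set ι), m i :=
          biSup_mono fun i hi => Finset.mem_biUnion.2 ⟨v, hv, hi⟩
        exact hle _ (hE v (Finset.mem_insert_of_mem hv))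
    rw [Finset.set_biInter_insert, Finset.prod_insert haT,
      (Indep_iff _ _ μ).1 hindep _ _ (hE a (Finset.mem_insert_self a T)) hT,
      ih (hC.subset (Set.subset_insert a _)) fun v hv => hE v (Finset.mem_insert_of_mem hv)]

section RandomGraph

variable {V : Type*}

abbrev edgesMeasurableSpace (C : Finset (Sym2 V)) : MeasurableSpace (Sym2 V → Bool) :=
  ⨆ e ∈ C, MeasurableSpace.comap (fun ω => ω e) inferInstance

lemma measurableSet_edgesMeasurableSpace {C : Finset (Sym2 V)} {e : Sym2 V} (he : e ∈ C)
    (b : Bool) : MeasurableSet[edgesMeasurableSpace C] {ω | ω e = b} := by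
  have hle : MeasurableSpace.comap (fun ω : Sym2 V → Bool => ω e) inferInstance ≤
      edgesMeasurableSpace C :=
    le_iSup₂ (f := fun e (_ : e ∈ C) => MeasurableSpace.comap (fun ω : Sym2 V → Bool => ω e)
      inferInstance) e he
  exact hle _ (comap_measurable _ (measurableSet_singleton b))

variable [Fintype V] {p : ℝ≥0} {hp : p ≤ 1}

/-- `ω s(u, v)` says whether `uv` is an edge; the diagonal coordinates `s(v, v)` are never read. -/
noncomputable def randomGraph (V : Type*) [Fintype V] (p : ℝ≥0) (hp : p ≤ 1) :
    Measure (Sym2 V → Bool) :=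
  Measure.pi fun _ => (PMF.bernoulli p hp).toMeasure

instance : IsProbabilityMeasure (randomGraph V p hp) := by
  unfold randomGraph; infer_instance

lemma randomGraph_biInter_eq_prod {W : Type*} {C : W → Finset (Sym2 V)}
    {E : W → Set (Sym2 V → Bool)} {T : Finset W} (hC : (T : Set W).PairwiseDisjoint C)
    (hE : ∀ w ∈ T, MeasurableSet[edgesMeasurableSpace (C w)] (E w)) :
    randomGraph V p hp (⋂ w ∈ T, E w) = ∏ w ∈ T, randomGraph V p hp (E w) :=
  (iIndepFun_pi (X := fun _ => id) fun _ => aemeasurable_id).iIndep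
    |>.measure_biInter_eq_prod_of_pairwiseDisjoint (fun e => (measurable_pi_apply e).comap_le)
      hC hE

lemma randomGraph_edge_eq_false (e : Sym2 V) :
    randomGraph V p hp {ω | ω e = false} = 1 - p := by
  have := (measurePreserving_eval (fun _ : Sym2 V => (PMF.bernoulli p hp).toMeasure) e)
    |>.measure_preimage (measurableSet_singleton false).nullMeasurableSet
  change randomGraph V p hp (Function.eval e ⁻¹' {false}) = _
  simpa [randomGraph, PMF.toMeasure_apply_singleton, PMF.bernoulli_apply] using this

lemma randomGraph_forall_mem_not_adj (K : Finset V) (v : V) :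
    randomGraph V p hp {ω | ∀ u ∈ K, ω s(u, v) = false} = (1 - p) ^ K.card := by
  have hset : {ω : Sym2 V → Bool | ∀ u ∈ K, ω s(u, v) = false} =
      ⋂ u ∈ K, {ω | ω s(u, v) = false} := by
    ext; simp
  have hC : (K : Set V).PairwiseDisjoint fun u => ({s(u, v)} : Finset (Sym2 V)) :=
    fun u _ w _ huw => Finset.disjoint_singleton.2 (mt Sym2.congr_left.1 huw)
  rw [hset, randomGraph_biInter_eq_prod hC fun u _ =>
      measurableSet_edgesMeasurableSpace (Finset.mem_singleton_self _) false]
  simp [randomGraph_edge_eq_false]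

lemma randomGraph_forall_not_mem_exists_adj (K : Finset V) :
    randomGraph V p hp {ω | ∀ v ∉ K, ∃ u ∈ K, ω s(u, v) = true} =
      (1 - (1 - p) ^ K.card) ^ (Fintype.card V - K.card) := by
  classical
  have hset : {ω : Sym2 V → Bool | ∀ v ∉ K, ∃ u ∈ K, ω s(u, v) = true} =
      ⋂ v ∈ Kᶜ, {ω | ∃ u ∈ K, ω s(u, v) = true} := by
    ext; simp
  have hC : ((Kᶜ : Finset V) : Set V).PairwiseDisjoint fun v => K.image fun u => s(u, v) := by
    intro v hv w hw hvw
    simp only [Function.onFun, Finset.disjoint_left, Finset.mem_image]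
    rintro _ ⟨u, hu, rfl⟩ ⟨u', hu', huv⟩
    rcases Sym2.eq_iff.1 huv with ⟨-, rfl⟩ | ⟨rfl, -⟩
    · exact hvw rfl
    · simp_all
  have hE : ∀ v ∈ Kᶜ, MeasurableSet[edgesMeasurableSpace (K.image fun u => s(u, v))]
      {ω | ∃ u ∈ K, ω s(u, v) = true} := by
    intro v _
    have : {ω : Sym2 V → Bool | ∃ u ∈ K, ω s(u, v) = true} =
        ⋃ u ∈ K, {ω | ω s(u, v) = true} := by
      ext; simp
    rw [this]
    exact Finset.measurableSet_biUnion K fun u hu =>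
      measurableSet_edgesMeasurableSpace (Finset.mem_image_of_mem _ hu) true
  have hcompl (v : V) : {ω : Sym2 V → Bool | ∃ u ∈ K, ω s(u, v) = true}ᶜ =
      {ω | ∀ u ∈ K, ω s(u, v) = false} := by
    ext; simp
  rw [hset, randomGraph_biInter_eq_prod hC hE, ← Finset.card_compl]
  refine Finset.prod_eq_pow_card fun v _ => ?_
  rw [← randomGraph_forall_mem_not_adj (hp := hp) K v, ← hcompl,
    prob_compl_eq_one_sub (Set.toFinite _).measurableSet, ENNReal.sub_sub_cancel ENNReal.one_ne_top
    prob_le_one]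

lemma randomGraph_exists_dominating_le (k : ℕ) :
    randomGraph V p hp
        {ω | ∃ K : Finset V, K.card = k ∧ ∀ v ∉ K, ∃ u ∈ K, u ≠ v ∧ ω s(u, v) = true} ≤
      (Fintype.card V).choose k * (1 - (1 - p) ^ k) ^ (Fintype.card V - k) := by
  have hsub : {ω : Sym2 V → Bool | ∃ K : Finset V, K.card = k ∧
        ∀ v ∉ K, ∃ u ∈ K, u ≠ v ∧ ω s(u, v) = true} ⊆
      ⋃ K ∈ Finset.powersetCard k Finset.univ, {ω | ∀ v ∉ K, ∃ u ∈ K, ω s(u, v) = true} := by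
    rintro ω ⟨K, rfl, hK⟩
    simp only [Set.mem_iUnion, Finset.mem_powersetCard_univ]
    exact ⟨K, rfl, fun v hv => (hK v hv).imp fun u hu => ⟨hu.1, hu.2.2⟩⟩
  calc _ ≤ _ := measure_mono hsub
    _ ≤ _ := measure_biUnion_finset_le _ _
    _ = _ := by
      rw [Finset.sum_congr rfl fun K hK => by
        rw [randomGraph_forall_not_mem_exists_adj, (Finset.mem_powersetCard_univ.1 hK)]]
      simp

lemma pow_le_exp_mul_log {x : ℝ} (hx : 0 ≤ x) (k : ℕ) : x ^ k ≤ Real.exp (k * Real.log x) := by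
  rcases hx.eq_or_lt with rfl | hx
  · rcases k.eq_zero_or_pos with rfl | hk
    · simp
    · simp [zero_pow hk.ne']
  · rw [Real.exp_nat_mul, Real.exp_log hx]

lemma ENNReal.one_sub_pow_pow_le_exp {x : ℝ≥0∞} {b : ℝ} (hb0 : 0 ≤ b)
    (hb : ENNReal.ofReal b ≤ x) (k l : ℕ) :
    (1 - x ^ k) ^ l ≤ ENNReal.ofReal (Real.exp (-(l * b ^ k))) := by
  have hbase : 1 - x ^ k ≤ ENNReal.ofReal (Real.exp (-b ^ k)) :=
    calc 1 - x ^ k ≤ 1 - ENNReal.ofReal (b ^ k) := by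
          rw [ENNReal.ofReal_pow hb0]; gcongr
      _ = ENNReal.ofReal (1 - b ^ k) := by
          rw [ENNReal.ofReal_sub _ (pow_nonneg hb0 k), ENNReal.ofReal_one]
      _ ≤ ENNReal.ofReal (Real.exp (-b ^ k)) :=
          ENNReal.ofReal_le_ofReal (Real.one_sub_le_exp_neg _)
  calc (1 - x ^ k) ^ l ≤ ENNReal.ofReal (Real.exp (-b ^ k)) ^ l := by gcongr
    _ = ENNReal.ofReal (Real.exp (-(l * b ^ k))) := by
      rw [← ENNReal.ofReal_pow (Real.exp_pos _).le, ← Real.exp_nat_mul, mul_neg]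

lemma randomGraph_exists_dominating_le_exp {b : ℝ} (hb0 : 0 ≤ b)
    (hb : ENNReal.ofReal b ≤ 1 - p) {k : ℕ} (hk : k ≤ Fintype.card V) :
    randomGraph V p hp
        {ω | ∃ K : Finset V, K.card = k ∧ ∀ v ∉ K, ∃ u ∈ K, u ≠ v ∧ ω s(u, v) = true} ≤
      ENNReal.ofReal (Real.exp (k * Real.log (Fintype.card V) - (Fintype.card V - k) * b ^ k)) := by
  set N := Fintype.card V
  have hchoose : (N.choose k : ℝ≥0∞) ≤ ENNReal.ofReal (Real.exp (k * Real.log N)) := by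
    rw [← ENNReal.ofReal_natCast]
    refine ENNReal.ofReal_le_ofReal ((?_ : (N.choose k : ℝ) ≤ (N : ℝ) ^ k).trans
      (pow_le_exp_mul_log N.cast_nonneg k))
    exact_mod_cast Nat.choose_le_pow N k
  calc _ ≤ N.choose k * (1 - (1 - (p : ℝ≥0∞)) ^ k) ^ (N - k) := randomGraph_exists_dominating_le k
    _ ≤ ENNReal.ofReal (Real.exp (k * Real.log N)) *
          ENNReal.ofReal (Real.exp (-((N - k : ℕ) * b ^ k))) :=
        mul_le_mul' hchoose (ENNReal.one_sub_pow_pow_le_exp hb0 hb k (N - k))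
    _ = _ := by
      rw [← ENNReal.ofReal_mul (Real.exp_pos _).le, ← Real.exp_add, Nat.cast_sub hk,
        ← sub_eq_add_neg]

end RandomGraph

section Estimates

open Real

lemma natCeil_sub_one_div_le_log_add_one {x Δ : ℝ} (hx : 1 < x) (hΔ : x / log x ≤ Δ) :
    (⌈(x - 1) / Δ⌉₊ : ℝ) ≤ log x + 1 := by
  have hlog : 0 < log x := log_pos hx
  have hΔ0 : 0 < Δ := (div_pos (by linarith) hlog).trans_le hΔ
  have hquot : (x - 1) / Δ ≤ log x :=
    calc (x - 1) / Δ ≤ (x - 1) / (x / log x) :=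
          div_le_div_of_nonneg_left (by linarith) (div_pos (by linarith) hlog) hΔ
      _ = (1 - 1 / x) * log x := by field_simp
      _ ≤ log x := by
          have : 0 < 1 / x := by positivity
          nlinarith
  linarith [Nat.ceil_lt_add_one (div_pos (by linarith : 0 < x - 1) hΔ0).le]

lemma rpow_min_sub_one_le_min_rpow_pow {x : ℝ} (hx : 1 ≤ x) (ε : ℝ) (k : ℕ) :
    x ^ (min ε 1 - 1) ≤ min (x ^ (-(1 - ε) / k)) 1 ^ k := by
  rcases k.eq_zero_or_pos with rfl | hk
  · simpa using rpow_le_one_of_one_le_of_nonpos hx (by linarith [min_le_right ε 1])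
  have hk' : (k : ℝ) ≠ 0 := by positivity
  have hbase : x ^ ((min ε 1 - 1) / k) ≤ min (x ^ (-(1 - ε) / k)) 1 :=
    le_min (rpow_le_rpow_of_exponent_le hx (by gcongr; linarith [min_le_left ε 1]))
      (rpow_le_one_of_one_le_of_nonpos hx
        (div_nonpos_of_nonpos_of_nonneg (by linarith [min_le_right ε 1]) k.cast_nonneg))
  calc x ^ (min ε 1 - 1) = (x ^ ((min ε 1 - 1) / k)) ^ k := by
        rw [← rpow_natCast, ← rpow_mul (by linarith), div_mul_cancel₀ _ hk']
    _ ≤ _ := by gcongr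

lemma ENNReal.ofReal_min_one_le_one_sub {q : ℝ} (hq0 : 0 ≤ q) :
    ENNReal.ofReal (min q 1) ≤ 1 - ((1 - q).toNNReal : ℝ≥0∞) := by
  rcases le_total q 1 with hq | hq
  · rw [min_eq_left hq]
    refine ENNReal.le_sub_of_add_le_left ENNReal.coe_ne_top ?_
    change ENNReal.ofReal (1 - q) + ENNReal.ofReal q ≤ 1
    rw [← ENNReal.ofReal_add (by linarith) hq0, sub_add_cancel, ENNReal.ofReal_one]
  · simp [min_eq_right hq, Real.toNNReal_of_nonpos (by linarith : 1 - q ≤ 0)]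

lemma mul_log_sub_mul_le {x k c δ : ℝ} (hlog : 1 ≤ log x) (hk : k ≤ log x + 1)
    (hkx : log x + 1 ≤ x / 2) (hc : x ^ (δ - 1) ≤ c) :
    k * log x - (x - k) * c ≤ 2 * log x ^ 2 - x ^ δ / 2 := by
  have hx : 0 < x := by linarith
  have hsplit : x ^ δ = x * x ^ (δ - 1) := by
    rw [rpow_sub_one hx.ne', mul_div_cancel₀ _ hx.ne']
  have hpos : 0 ≤ x ^ (δ - 1) := rpow_nonneg hx.le _
  nlinarith

lemma tendsto_mul_log_sq_sub_rpow_atBot (a : ℝ) {δ : ℝ} (hδ : 0 < δ) :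
    Tendsto (fun x => a * log x ^ 2 - x ^ δ / 2) atTop atBot := by
  have hratio : Tendsto (fun x : ℝ => a * (log x ^ 2 / x ^ δ) - 1 / 2) atTop
      (nhds (a * 0 - 1 / 2)) := by
    refine ((isLittleO_log_rpow_rpow_atTop 2 hδ).tendsto_div_nhds_zero.congr fun x => ?_)
      |>.const_mul a |>.sub_const _
    norm_cast
  refine ((tendsto_rpow_atTop hδ).atTop_mul_neg (by norm_num) hratio).congr' ?_
  filter_upwards [eventually_gt_atTop 0] with x hx
  have : 0 < x ^ δ := rpow_pos_of_pos hx δ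
  field_simp

lemma eventually_log_add_one_le_half : ∀ᶠ x : ℝ in atTop, log x + 1 ≤ x / 2 := by
  filter_upwards [isLittleO_log_id_atTop.bound (by norm_num : (0 : ℝ) < 1 / 4),
    eventually_ge_atTop 4] with x hlog hx
  rw [norm_eq_abs, norm_eq_abs, id, abs_of_nonneg (by linarith : (0 : ℝ) ≤ x)] at hlog
  linarith [le_abs_self (log x)]

end Estimates

theorem stmt_14 (ε : ℝ) (hε : 0 < ε) (Δ : ℕ → ℕ)
    (hΔ : ∀ᶠ n : ℕ in atTop,
      (n : ℝ) / Real.log n ≤ Δ n ∧ Δ n ≤ n - 1) :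
    Tendsto (fun n : ℕ =>
      (Measure.pi (fun _ : Sym2 (Fin n) =>
          (PMF.bernoulli
            (Real.toNNReal (1 - (n : ℝ) ^ (-(1 - ε) / (⌈((n : ℝ) - 1) / Δ n⌉₊ : ℝ))))
            (Real.toNNReal_le_one.mpr (by
              nlinarith [Real.rpow_nonneg (Nat.cast_nonneg n : (0:ℝ) ≤ (n:ℝ))
                (-(1 - ε) / (⌈((n : ℝ) - 1) / Δ n⌉₊ : ℝ))]))).toMeasure))
        {ω : Sym2 (Fin n) → Bool |
          ∃ K : Finset (Fin n), K.card = ⌈((n : ℝ) - 1) / Δ n⌉₊ ∧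
            ∀ v : Fin n, v ∉ K → ∃ u ∈ K, u ≠ v ∧ ω s(u, v) = true})
      atTop (nhds 0) := by
  have hδ : 0 < min ε 1 := lt_min hε one_pos
  have hlim : Tendsto (fun n : ℕ => ENNReal.ofReal (Real.exp
      (2 * Real.log n ^ 2 - (n : ℝ) ^ min ε 1 / 2))) atTop (nhds 0) := by
    simpa using ENNReal.tendsto_ofReal (Real.tendsto_exp_atBot.comp
      ((tendsto_mul_log_sq_sub_rpow_atBot 2 hδ).comp tendsto_natCast_atTop_atTop))
  refine tendsto_of_tendsto_of_tendsto_of_le_of_le' tendsto_const_nhds hlim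
    (Eventually.of_forall fun _ => zero_le) ?_
  filter_upwards [hΔ, tendsto_natCast_atTop_atTop.eventually eventually_log_add_one_le_half,
    (Real.tendsto_log_atTop.comp tendsto_natCast_atTop_atTop).eventually_ge_atTop 1,
    eventually_gt_atTop 1] with n ⟨hΔn, _⟩ hhalf hlog hn
  set k := ⌈((n : ℝ) - 1) / Δ n⌉₊
  set q := (n : ℝ) ^ (-(1 - ε) / (k : ℝ))
  have hk : (k : ℝ) ≤ Real.log n + 1 :=
    natCeil_sub_one_div_le_log_add_one (by exact_mod_cast hn) hΔn
  have hkn : k ≤ Fintype.card (Fin n) := by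
    rw [Fintype.card_fin]; exact_mod_cast (by linarith : (k : ℝ) ≤ n)
  have hq : 0 ≤ q := Real.rpow_nonneg n.cast_nonneg _
  refine (randomGraph_exists_dominating_le_exp (le_min hq zero_le_one)
    (ENNReal.ofReal_min_one_le_one_sub hq) hkn).trans ?_
  rw [Fintype.card_fin]
  exact ENNReal.ofReal_le_ofReal (Real.exp_le_exp.2 (mul_log_sub_mul_le hlog hk hhalf
    (rpow_min_sub_one_le_min_rpow_pow (by exact_mod_cast hn.le) ε k)))
end

section
/- Let m ≤ n/100, let G be an n-vertex graph with minimum degree at least n − m, and let T be an n-vertex tree containing at least 10m pairwise vertex-disjoint bare paths of length 4. Then G contains a copy of T (as a spanning subgraph). -/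
/-!
Pick the second vertex of each bare path. These form a set `M` of at least `10m` vertices of
degree two at pairwise distance at least three, so `T - M` is a forest on at most `n - 10m`
vertices, which embeds greedily leaf by leaf: a new vertex has at most one embedded neighbour, and
the image of that neighbour has at least `n - m` neighbours. It remains to send `M` bijectively
onto the `|M|` unused vertices `U`, each `x ∈ M` to a common neighbour of the images of its two
neighbours. Since every vertex of `G` misses at most `m` vertices, each `x` has at least
`|U| - 2m` candidates, and more than `m` elements of `M` have candidates covering all of `U`;
hence Hall's condition holds.
-/

open Finset Function

namespace SimpleGraph

variable {V : Type*} {G : SimpleGraph V}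

/-- The first vertex of a longest path is a leaf. -/
theorem IsAcyclic.exists_neighborSet_subsingleton [Finite V] [Nonempty V] (hG : G.IsAcyclic) :
    ∃ v, (G.neighborSet v).Subsingleton := by
  obtain ⟨u, v, p, hp, hlongest⟩ := Walk.exists_isPath_forall_isPath_length_le_length G
  have mem_support : ∀ x, G.Adj u x → x ∈ p.support := fun x hx => by
    by_contra hxp
    have := hlongest _ _ _ ((Walk.cons_isPath_iff hx.symm p).2 ⟨hp, hxp⟩)
    simp at this
  refine ⟨u, fun w (hw : G.Adj u w) w' (hw' : G.Adj u w') => ?_⟩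
  rw [hG.eq_snd_of_adj_start hp hw (mem_support w hw),
    hG.eq_snd_of_adj_start hp hw' (mem_support w' hw')]

theorem IsAcyclic.exists_mem_card_filter_adj_le_one [DecidableRel G.Adj] (hG : G.IsAcyclic)
    {s : Finset V} (hs : s.Nonempty) : ∃ a ∈ s, #{b ∈ s | G.Adj a b} ≤ 1 := by
  have : Nonempty s := hs.to_subtype
  obtain ⟨⟨a, ha⟩, hleaf⟩ := (hG.induce (s : Set V)).exists_neighborSet_subsingleton
  refine ⟨a, ha, card_le_one.2 fun b hb c hc => ?_⟩
  rw [mem_filter] at hb hc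
  have := @hleaf ⟨b, hb.1⟩ (by simpa using hb.2) ⟨c, hc.1⟩ (by simpa using hc.2)
  simpa using this

theorem exists_adj_notMem_of_card_le_degree [Fintype V] [DecidableRel G.Adj] {W : Finset V}
    {b : V} (hb : b ∈ W) (h : #W ≤ G.degree b) : ∃ y ∉ W, G.Adj b y := by
  classical
  obtain ⟨y, hby, hy⟩ := exists_mem_notMem_of_card_lt_card (s := W.erase b)
    (t := G.neighborFinset b) (by
      rw [card_neighborFinset_eq_degree, card_erase_of_mem hb]
      have := card_pos.2 ⟨b, hb⟩
      omega)
  rw [mem_neighborFinset] at hby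
  exact ⟨y, fun hyW => hy (mem_erase.2 ⟨hby.ne', hyW⟩), hby⟩

variable {α : Type*} {H : SimpleGraph α}

theorem injOn_hom_update_insert [DecidableEq α] {s : Set α} {g : α → V} (hg : Set.InjOn g s)
    (hgH : ∀ a ∈ s, ∀ b ∈ s, H.Adj a b → G.Adj (g a) (g b)) {a : α} (ha : a ∉ s) {y : V}
    (hy : y ∉ g '' s) (hya : ∀ b ∈ s, H.Adj a b → G.Adj y (g b)) :
    Set.InjOn (Function.update g a y) (insert a s) ∧
      ∀ c ∈ insert a s, ∀ d ∈ insert a s, H.Adj c d →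
        G.Adj (Function.update g a y c) (Function.update g a y d) := by
  have heq : Set.EqOn (Function.update g a y) g s := fun c hc =>
    Function.update_of_ne (ne_of_mem_of_not_mem hc ha) _ _
  refine ⟨(Set.injOn_insert ha).2
    ⟨hg.congr heq.symm, by rwa [heq.image_eq, Function.update_self]⟩, ?_⟩
  rintro c (rfl | hc) d (rfl | hd) hcd
  · exact absurd hcd H.irrefl
  · rw [Function.update_self, heq hd]; exact hya d hd hcd
  · rw [Function.update_self, heq hc]; exact (hya c hc hcd.symm).symm
  · rw [heq hc, heq hd]; exact hgH c hc d hd hcd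

/-- Remove a leaf, embed the rest, then map the leaf to a fresh neighbour of the image of its
parent. -/
theorem IsAcyclic.exists_injOn_hom [Fintype V] [Nonempty V] [DecidableRel G.Adj]
    (hH : H.IsAcyclic) (S : Finset α) (hSV : #S ≤ Fintype.card V)
    (hG : ∀ v, #S ≤ G.degree v + 1) :
    ∃ g : α → V, Set.InjOn g S ∧ ∀ a ∈ S, ∀ b ∈ S, H.Adj a b → G.Adj (g a) (g b) := by
  classical
  induction S using Finset.strongInduction with | H S ih =>
  rcases S.eq_empty_or_nonempty with rfl | hS
  · exact ⟨fun _ => Classical.arbitrary V, by simp, by simp⟩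
  obtain ⟨a, ha, hleaf⟩ := hH.exists_mem_card_filter_adj_le_one hS
  have hcard : #(S.erase a) + 1 = #S := card_erase_add_one ha
  obtain ⟨g, hg, hgH⟩ := ih (S.erase a) (erase_ssubset ha) (by omega)
    (fun v => by have := hG v; omega)
  obtain ⟨y, hy, hya⟩ : ∃ y ∉ (S.erase a).image g,
      ∀ b ∈ S.erase a, H.Adj a b → G.Adj y (g b) := by
    rcases ({b ∈ S.erase a | H.Adj a b}).eq_empty_or_nonempty with hnone | ⟨b, hb⟩
    · obtain ⟨y, -, hy⟩ := exists_mem_notMem_of_card_lt_card (s := (S.erase a).image g)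
        (t := univ) (by rw [card_univ]; exact card_image_le.trans_lt (by omega))
      refine ⟨y, hy, fun b hb hab => ?_⟩
      simp [filter_eq_empty_iff.1 hnone hb] at hab
    · rw [mem_filter] at hb
      obtain ⟨y, hy, hby⟩ := exists_adj_notMem_of_card_le_degree (G := G)
        (mem_image_of_mem g hb.1) (card_image_le.trans (by have := hG (g b); omega))
      refine ⟨y, hy, fun c hc hac => ?_⟩
      have hcb : c = b := card_le_one.1 hleaf c (by simp_all) b (by simp_all)
      exact hcb ▸ hby.symm
  have := injOn_hom_update_insert hg hgH (by simp) (y := y) (by rwa [← coe_image, mem_coe]) hya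
  rw [← coe_insert, insert_erase ha] at this
  exact ⟨_, this⟩

section MinDegree

variable [Fintype V] [DecidableRel G.Adj] {m : ℕ}

theorem card_filter_not_adj_le {v : V} (hv : Fintype.card V ≤ G.degree v + m) :
    #{u | ¬ G.Adj v u} ≤ m := by
  have := card_filter_add_card_filter_not (s := univ) (G.Adj v)
  rw [← neighborFinset_eq_filter, card_neighborFinset_eq_degree, card_univ] at this
  omega

theorem card_le_card_filter_forall_adj_add [DecidableEq V]
    (hG : ∀ v, Fintype.card V ≤ G.degree v + m)
    (U A : Finset V) : #U ≤ #{u ∈ U | ∀ a ∈ A, G.Adj a u} + #A * m := by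
  calc #U ≤ #({u ∈ U | ∀ a ∈ A, G.Adj a u} ∪ A.biUnion fun a => {u | ¬ G.Adj a u}) := by
        refine card_le_card fun u hu => ?_
        by_cases h : ∀ a ∈ A, G.Adj a u <;> simp_all
    _ ≤ #{u ∈ U | ∀ a ∈ A, G.Adj a u} + ∑ a ∈ A, #{u | ¬ G.Adj a u} :=
        (card_union_le _ _).trans (by gcongr; exact card_biUnion_le)
    _ ≤ #{u ∈ U | ∀ a ∈ A, G.Adj a u} + #A * m := by
        have := sum_le_card_nsmul A _ m fun a _ => card_filter_not_adj_le (hG a)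
        rw [smul_eq_mul] at this
        omega

variable {ι : Type*} {A : ι → Finset V}

/-- If not, picking for each `i ∈ s` an element of `A i` not adjacent to `u` gives, by
disjointness, `#s` distinct non-neighbours of `u`. -/
theorem exists_mem_forall_adj_of_lt_card (hG : ∀ v, Fintype.card V ≤ G.degree v + m)
    (hA : Pairwise (Disjoint on A)) {s : Finset ι} (hs : m < #s) (u : V) :
    ∃ i ∈ s, ∀ a ∈ A i, G.Adj a u := by
  by_contra! h
  have : Nonempty V := ⟨u⟩
  choose! f hfA hfu using h
  have : #s ≤ #{w | ¬ G.Adj u w} := by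
    refine card_le_card_of_injOn f (fun i hi => by simpa [adj_comm] using hfu i hi)
      fun i hi j hj hij => ?_
    by_contra hne
    exact Finset.disjoint_left.1 (hA hne) (hfA i hi) (hij ▸ hfA j hj)
  have := card_filter_not_adj_le (hG u)
  omega

theorem exists_injective_forall_adj [Fintype ι] (hG : ∀ v, Fintype.card V ≤ G.degree v + m)
    {k : ℕ} (U : Finset V) (hιU : Fintype.card ι ≤ #U) (hU : (k + 1) * m ≤ #U)
    (hAk : ∀ i, #(A i) ≤ k) (hA : Pairwise (Disjoint on A)) :
    ∃ e : ι → V, Function.Injective e ∧ ∀ i, e i ∈ U ∧ ∀ a ∈ A i, G.Adj a (e i) := by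
  classical
  let t i := {u ∈ U | ∀ a ∈ A i, G.Adj a u}
  suffices hall : ∀ s, #s ≤ #(s.biUnion t) by
    obtain ⟨e, he, het⟩ := (all_card_le_biUnion_card_iff_exists_injective t).1 hall
    exact ⟨e, he, fun i => mem_filter.1 (het i)⟩
  intro s
  rcases s.eq_empty_or_nonempty with rfl | ⟨i, hi⟩
  · simp
  by_cases hs : #s + k * m ≤ #U
  · calc #s ≤ #{u ∈ U | ∀ a ∈ A i, G.Adj a u} := by
          have := card_le_card_filter_forall_adj_add hG U (A i)
          have := Nat.mul_le_mul_right m (hAk i)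
          omega
      _ ≤ #(s.biUnion t) := card_le_card (subset_biUnion_of_mem t hi)
  · have hcover : U ⊆ s.biUnion t := fun u hu => by
      obtain ⟨j, hj, hju⟩ := exists_mem_forall_adj_of_lt_card hG hA (by nlinarith) u
      exact mem_biUnion.2 ⟨j, hj, mem_filter.2 ⟨hu, hju⟩⟩
    calc #s ≤ Fintype.card ι := card_le_univ s
      _ ≤ #U := hιU
      _ ≤ #(s.biUnion t) := card_le_card hcover

end MinDegree

theorem exists_injective_hom_of_injOn_compl {M : Finset α}
    (hM : ∀ x ∈ M, ∀ y ∈ M, ¬ H.Adj x y) {g : α → V} (hg : Set.InjOn g (↑M)ᶜ)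
    (hgH : ∀ a ∉ M, ∀ b ∉ M, H.Adj a b → G.Adj (g a) (g b)) {e : M → V}
    (he : Injective e) (heg : ∀ x a, a ∉ M → e x ≠ g a)
    (heH : ∀ (x : M) b, H.Adj x b → G.Adj (g b) (e x)) :
    ∃ f : H →g G, Injective f := by
  classical
  let f a := if h : a ∈ M then e ⟨a, h⟩ else g a
  refine ⟨⟨f, fun {a b} hab => ?_⟩, fun a b (hab : f a = f b) => ?_⟩ <;>
    by_cases ha : a ∈ M <;> by_cases hb : b ∈ M <;>
    simp only [f, ha, hb, dite_true, dite_false] at hab ⊢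
  · exact absurd hab (hM a ha b hb)
  · exact (heH ⟨a, ha⟩ b hab).symm
  · exact heH ⟨b, hb⟩ a hab.symm
  · exact hgH a ha b hb hab
  · exact congrArg Subtype.val (he hab)
  · exact absurd hab (heg _ b hb)
  · exact absurd hab.symm (heg _ a ha)
  · exact hg ha hb hab

theorem IsAcyclic.exists_injective_hom_of_packing [Fintype α] [Fintype V] [DecidableRel H.Adj]
    [DecidableRel G.Adj] (hH : H.IsAcyclic)
    (hαV : Fintype.card α ≤ Fintype.card V) {k m : ℕ}
    (hG : ∀ v, Fintype.card V ≤ G.degree v + m) (M : Finset α) (hM : (k + 1) * m ≤ #M)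
    (hMdeg : ∀ x ∈ M, H.degree x ≤ k) (hMind : ∀ x ∈ M, ∀ y ∈ M, ¬ H.Adj x y)
    (hMdisj : (M : Set α).Pairwise (Disjoint on fun x => H.neighborFinset x)) :
    ∃ f : H →g G, Injective f := by
  classical
  cases isEmpty_or_nonempty α
  · exact ⟨⟨isEmptyElim, fun {a} => isEmptyElim a⟩, isEmptyElim⟩
  have : Nonempty V := Fintype.card_pos_iff.1 (Fintype.card_pos.trans_le hαV)
  have hmM : m ≤ #M := (Nat.le_mul_of_pos_left m k.succ_pos).trans hM
  have hSM := card_compl_add_card M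
  obtain ⟨g, hg, hgH⟩ := hH.exists_injOn_hom (G := G) Mᶜ (by omega) fun v => by
    have := hG v
    omega
  have hnbr : ∀ x ∈ M, H.neighborFinset x ⊆ Mᶜ := fun x hx y hy =>
    mem_compl.2 fun hyM => hMind x hx y hyM ((H.mem_neighborFinset x y).1 hy)
  let U := univ \ Mᶜ.image g
  have hU : #M ≤ #U := by
    rw [card_univ_sdiff, card_image_of_injOn hg]
    omega
  obtain ⟨e, he, heUA⟩ := exists_injective_forall_adj (ι := M) (k := k) hG U (by simpa using hU)
    (by omega) (A := fun x => (H.neighborFinset x).image g)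
    (fun x => card_image_le.trans (by simpa using hMdeg x x.2)) fun x y hxy => by
      refine Finset.disjoint_left.2 fun z hzx hzy => ?_
      obtain ⟨a, ha, rfl⟩ := mem_image.1 hzx
      obtain ⟨b, hb, hab⟩ := mem_image.1 hzy
      have := hg (hnbr y y.2 hb) (hnbr x x.2 ha) hab
      exact Finset.disjoint_left.1 (hMdisj x.2 y.2 (Subtype.coe_ne_coe.2 hxy)) ha (this ▸ hb)
  refine exists_injective_hom_of_injOn_compl hMind (by simpa using hg)
    (fun a ha b hb => hgH a (mem_compl.2 ha) b (mem_compl.2 hb)) he (fun x a ha hxa => ?_)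
    fun x b hxb => (heUA x).2 (g b) (mem_image_of_mem g ((H.mem_neighborFinset x b).2 hxb))
  exact (mem_sdiff.1 (heUA x).1).2 (hxa ▸ mem_image_of_mem g (mem_compl.2 ha))

theorem Walk.IsPath.mem_support_of_adj_getVert [G.LocallyFinite] {u v : V} {p : G.Walk u v}
    (hp : p.IsPath) {i : ℕ} (hi0 : 0 < i) (hi : i < p.length)
    (hdeg : G.degree (p.getVert i) ≤ 2) {y : V} (hy : G.Adj (p.getVert i) y) : y ∈ p.support := by
  classical
  have hprev : G.Adj (p.getVert (i - 1)) (p.getVert i) := by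
    simpa [Nat.sub_add_cancel hi0] using p.adj_getVert_succ (i := i - 1) (by omega)
  have hne : p.getVert (i - 1) ≠ p.getVert (i + 1) := fun h => by
    have := hp.getVert_injOn (by simp; omega) (by simp; omega) h
    omega
  have hnbr : G.neighborFinset (p.getVert i) = {p.getVert (i - 1), p.getVert (i + 1)} := by
    refine (eq_of_subset_of_card_le (fun z hz => ?_) ?_).symm
    · simp only [mem_insert, mem_singleton] at hz
      rcases hz with rfl | rfl
      · simpa using hprev.symm
      · simpa using p.adj_getVert_succ hi
    · rwa [card_pair hne, card_neighborFinset_eq_degree]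
  have hy' : y ∈ G.neighborFinset (p.getVert i) := by simpa using hy
  rw [hnbr, mem_insert, mem_singleton] at hy'
  rcases hy' with rfl | rfl <;> exact p.getVert_mem_support _

/-- Take the second vertex of each path. -/
theorem exists_packing_of_bare_paths [Fintype α] [DecidableRel H.Adj]
    (P : List (Σ u v : α, H.Walk u v)) (hpath : ∀ p ∈ P, p.2.2.IsPath)
    (hlen : ∀ p ∈ P, 2 ≤ p.2.2.length)
    (hbare : ∀ p ∈ P, ∀ w ∈ p.2.2.support, w ≠ p.1 → w ≠ p.2.1 → H.degree w = 2)
    (hdisj : P.Pairwise fun p q => ∀ w, w ∈ p.2.2.support → w ∉ q.2.2.support) :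
    ∃ M : Finset α, P.length ≤ #M ∧ (∀ x ∈ M, H.degree x ≤ 2) ∧
      (∀ x ∈ M, ∀ y ∈ M, ¬ H.Adj x y) ∧
      (M : Set α).Pairwise (Disjoint on fun x => H.neighborFinset x) := by
  classical
  let mid : (Σ u v : α, H.Walk u v) → α := fun p => p.2.2.getVert 1
  have hmid_deg : ∀ p ∈ P, H.degree (mid p) = 2 := fun p hp => by
    have := hlen p hp
    refine hbare p hp _ (p.2.2.getVert_mem_support 1) (fun h => ?_) fun h => ?_
    · have := (hpath p hp).getVert_injOn (by simp; omega) (by simp)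
        (h.trans p.2.2.getVert_zero.symm)
      omega
    · have := (hpath p hp).getVert_injOn (by simp; omega) (by simp)
        (h.trans p.2.2.getVert_length.symm)
      omega
  have hmid_nbr : ∀ p ∈ P, ∀ y, H.Adj (mid p) y → y ∈ p.2.2.support := fun p hp y hy =>
    (hpath p hp).mem_support_of_adj_getVert one_pos (hlen p hp) (hmid_deg p hp).le hy
  have : Std.Symm fun p q : (Σ u v : α, H.Walk u v) =>
      ∀ w, w ∈ p.2.2.support → w ∉ q.2.2.support := ⟨fun p q h w hwq hwp => h w hwp hwq⟩
  have heq : ∀ p ∈ P, ∀ q ∈ P, ∀ w, w ∈ p.2.2.support → w ∈ q.2.2.support → p = q :=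
    fun p hp q hq w hwp hwq => by_contra fun hpq => hdisj.forall hp hq hpq w hwp hwq
  have hmem : ∀ x, x ∈ (P.map mid).toFinset ↔ ∃ p ∈ P, mid p = x := by simp
  refine ⟨(P.map mid).toFinset, ?_, ?_, ?_, ?_⟩
  · have hnodup : (P.map mid).Nodup := List.pairwise_map.2 <|
      hdisj.imp fun {p q} h (hpq : mid p = mid q) =>
        h (mid p) (p.2.2.getVert_mem_support 1) (hpq ▸ q.2.2.getVert_mem_support 1)
    rw [List.toFinset_card_of_nodup hnodup, List.length_map]
  · simp only [hmem]
    rintro _ ⟨p, hp, rfl⟩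
    exact (hmid_deg p hp).le
  · simp only [hmem]
    rintro _ ⟨p, hp, rfl⟩ _ ⟨q, hq, rfl⟩ hpq
    obtain rfl := heq p hp q hq _ (hmid_nbr p hp _ hpq) (q.2.2.getVert_mem_support 1)
    exact H.irrefl hpq
  · rintro _ hx _ hy hxy
    obtain ⟨p, hp, rfl⟩ := (hmem _).1 hx
    obtain ⟨q, hq, rfl⟩ := (hmem _).1 hy
    refine Finset.disjoint_left.2 fun z hzp hzq => hxy ?_
    rw [heq p hp q hq z (hmid_nbr p hp z (by simpa using hzp))
      (hmid_nbr q hq z (by simpa using hzq))]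

end SimpleGraph

theorem stmt_18_general (n m : ℕ)
    (V : Type) [Fintype V] (G : SimpleGraph V) [DecidableRel G.Adj]
    (hcard : Fintype.card V = n) (hdeg : ∀ v : V, n - m ≤ G.degree v)
    (T : SimpleGraph (Fin n)) [DecidableRel T.Adj] (hT : T.IsTree)
    (P : List (Σ u : Fin n, Σ v : Fin n, T.Walk u v))
    (hP : 10 * m ≤ P.length)
    (hpaths : ∀ p ∈ P, p.2.2.IsPath ∧ p.2.2.length = 4 ∧
      ∀ w ∈ p.2.2.support, w ≠ p.1 → w ≠ p.2.1 → T.degree w = 2)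
    (hdisj : P.Pairwise (fun p q => ∀ w, w ∈ p.2.2.support → w ∉ q.2.2.support)) :
    ∃ f : T →g G, Function.Injective f := by
  obtain ⟨M, hPM, hMdeg, hMind, hMdisj⟩ := SimpleGraph.exists_packing_of_bare_paths P
    (fun p hp => (hpaths p hp).1) (fun p hp => by have := (hpaths p hp).2.1; omega)
    (fun p hp => (hpaths p hp).2.2) hdisj
  exact hT.isAcyclic.exists_injective_hom_of_packing (by simp [hcard]) (k := 2) (m := m)
    (fun v => by have := hdeg v; omega) M (by omega) hMdeg hMind hMdisj

theorem stmt_18 (n m : ℕ) (hm : 100 * m ≤ n)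
    (V : Type) [Fintype V] [DecidableEq V] (G : SimpleGraph V) [DecidableRel G.Adj]
    (hcard : Fintype.card V = n) (hdeg : ∀ v : V, n - m ≤ G.degree v)
    (T : SimpleGraph (Fin n)) [DecidableRel T.Adj] (hT : T.IsTree)
    (P : List (Σ u : Fin n, Σ v : Fin n, T.Walk u v))
    (hP : 10 * m ≤ P.length)
    (hpaths : ∀ p ∈ P, p.2.2.IsPath ∧ p.2.2.length = 4 ∧
      ∀ w ∈ p.2.2.support, w ≠ p.1 → w ≠ p.2.1 → T.degree w = 2)
    (hdisj : P.Pairwise (fun p q => ∀ w, w ∈ p.2.2.support → w ∉ q.2.2.support)) :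
    ∃ f : T →g G, Function.Injective f :=
  stmt_18_general n m V G hcard hdeg T hT P hP hpaths hdisj
end
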